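/- arXiv:math/0106143 — 2 statements merged into one kernel-verified Lean document; each statement's English description precedes it below -/
import Mathlib

section
/- Let f : X ⟶ Y be a morphism of simplicial Heyting algebras (simplicial objects in the category of Heyting algebras and Heyting algebra homomorphisms) such that f_n is surjective for every n. Then the underlying morphism of simplicial sets is a Kan fibration, i.e. it has the right lifting property with respect to every horn inclusion Λ[n,k] ⟶ Δ[n] for n ≥ 1 and 0 ≤ k ≤ n. -/
/-!
Heyting algebras form a Maltsev variety: `m a b c := ((a ⇨ b) ⇨ c) ⊓ ((c ⇨ b) ⇨ a)` satisfies
`m a a c = c` and `m a b b = a`, and commutes with Heyting homomorphisms, hence with the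
simplicial operators and with `f`. Given a horn `u` in `X` over an `(n + 1)`-simplex `y` of `Y`,
lift `y` to any `l`, then correct the faces of `l` one at a time, moving inwards towards `k` from
both ends of `[n + 1]`. To correct face `r ≠ k`, let `ρ` collapse vertex `r` onto its neighbour `s`
on the side of `k`: `ρ` lands in the horn, is the identity on face `r` and maps every face `j ≠ s`
into itself. So `m l (l ∘ ρ) (u ∘ ρ)` agrees with `u` on face `r`, is unchanged on the faces
already corrected (where `l ∘ ρ = u ∘ ρ`), and still lies over `m y (y ∘ ρ) (y ∘ ρ) = y`.
-/

open CategoryTheory Simplicial SSet Opposite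

universe u

/-- The functor sending a simplicial Heyting algebra to its underlying
simplicial set. -/
def simplicialHeytingToSSet :
    CategoryTheory.SimplicialObject HeytAlg.{u} ⥤ SSet.{u} :=
  (CategoryTheory.SimplicialObject.whiskering _ _).obj (forget HeytAlg)

section HeytingMaltsev

variable {α β F : Type*} [HeytingAlgebra α] [HeytingAlgebra β]

def heytingMaltsev (a b c : α) : α := ((a ⇨ b) ⇨ c) ⊓ ((c ⇨ b) ⇨ a)

@[simp]
lemma heytingMaltsev_self_left (a b : α) : heytingMaltsev a a b = b := by
  simp [heytingMaltsev, le_himp_iff]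

@[simp]
lemma heytingMaltsev_self_right (a b : α) : heytingMaltsev a b b = a := by
  simp [heytingMaltsev, le_himp_iff]

lemma map_heytingMaltsev [FunLike F α β] [HeytingHomClass F α β] (g : F) (a b c : α) :
    g (heytingMaltsev a b c) = heytingMaltsev (g a) (g b) (g c) := by
  simp [heytingMaltsev, map_inf, map_himp]

end HeytingMaltsev

namespace SimplexCategory

def collapse {n : ℕ} (r s : Fin (n + 1)) (hrs : (r : ℕ) = s + 1 ∨ (s : ℕ) = r + 1) :
    ⦋n⦌ ⟶ ⦋n⦌ :=
  mkHom ⟨fun t => if t = r then s else t, by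
    intro a b hab
    dsimp only
    split_ifs <;> simp only [Fin.le_def, Fin.ext_iff] at * <;> omega⟩

section

variable {n : ℕ} {r s : Fin (n + 1)} {hrs : (r : ℕ) = s + 1 ∨ (s : ℕ) = r + 1}

lemma collapse_apply (t : Fin (n + 1)) :
    (collapse r s hrs).toOrderHom t = if t = r then s else t :=
  rfl

lemma collapse_ne_self (t : Fin (n + 1)) : (collapse r s hrs).toOrderHom t ≠ r := by
  rw [collapse_apply]
  split_ifs with h
  · rw [Ne, Fin.ext_iff]
    omega
  · exact h

end

variable {n : ℕ} {r s : Fin (n + 2)} {hrs : (r : ℕ) = s + 1 ∨ (s : ℕ) = r + 1}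

lemma δ_comp_collapse_self : δ r ≫ collapse r s hrs = δ r := by
  ext t : 3
  simp only [comp_toOrderHom, OrderHom.comp_coe, Function.comp_apply, collapse_apply]
  exact if_neg (Fin.succAbove_ne r t)

lemma δ_comp_collapse_eq_factor_δ_comp_δ {j : Fin (n + 2)} (hjs : j ≠ s) :
    δ j ≫ collapse r s hrs = factor_δ (δ j ≫ collapse r s hrs) j ≫ δ j := by
  refine (factor_δ_spec _ j fun t => ?_).symm
  simp only [comp_toOrderHom, OrderHom.comp_coe, Function.comp_apply, collapse_apply]
  split_ifs
  · exact hjs.symm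
  · exact Fin.succAbove_ne j t

end SimplexCategory

namespace SSet

open SimplexCategory in
lemma range_map_collapse_le_horn {n : ℕ} {k r s : Fin (n + 2)}
    (hrs : (r : ℕ) = s + 1 ∨ (s : ℕ) = r + 1) (hrk : r ≠ k) :
    Subcomplex.range (SSet.stdSimplex.map (collapse r s hrs)) ≤ Λ[n + 1, k] := by
  rw [Subcomplex.range_eq_ofSimplex, Subcomplex.ofSimplex_le_iff, mem_horn_iff_notMem_range]
  exact ⟨r, hrk, fun ⟨t, ht⟩ => collapse_ne_self (hrs := hrs) t ht⟩

def horn.ExtendsOnFaces {K : SSet.{u}} {n : ℕ} {k : Fin (n + 2)}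
    (u : (Λ[n + 1, k] : SSet.{u}) ⟶ K) (l : Δ[n + 1] ⟶ K) (P : Fin (n + 2) → Prop) : Prop :=
  ∀ j (hj : j ≠ k), P j → stdSimplex.δ j ≫ l = horn.ι k j hj ≫ u

end SSet

namespace SimplicialHeyting

variable {X Y : SimplicialObject HeytAlg.{u}}

instance (m : SimplexCategoryᵒᵖ) : HeytingAlgebra ((simplicialHeytingToSSet.obj X).obj m) :=
  inferInstanceAs (HeytingAlgebra (X.obj m))

section Maltsev

variable {K L : SSet.{u}}

def maltsev (a b c : K ⟶ simplicialHeytingToSSet.obj X) : K ⟶ simplicialHeytingToSSet.obj X where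
  app m := TypeCat.ofHom fun x => heytingMaltsev (a.app m x) (b.app m x) (c.app m x)
  naturality m m' g := by
    ext x
    simp only [TypeCat.Fun.toFun_apply, comp_apply, TypeCat.hom_ofHom, TypeCat.Fun.coe_mk,
      NatTrans.naturality_apply]
    exact (map_heytingMaltsev (X.map g).hom _ _ _).symm

variable (a b c : K ⟶ simplicialHeytingToSSet.obj X)

@[simp]
lemma maltsev_self_left : maltsev a a b = b := by
  ext m x
  exact heytingMaltsev_self_left _ _

@[simp]
lemma maltsev_self_right : maltsev a b b = a := by
  ext m x
  exact heytingMaltsev_self_right _ _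

@[simp]
lemma comp_maltsev (g : L ⟶ K) : g ≫ maltsev a b c = maltsev (g ≫ a) (g ≫ b) (g ≫ c) :=
  rfl

@[simp]
lemma maltsev_comp_map (f : X ⟶ Y) :
    maltsev a b c ≫ simplicialHeytingToSSet.map f =
      maltsev (a ≫ simplicialHeytingToSSet.map f) (b ≫ simplicialHeytingToSSet.map f)
        (c ≫ simplicialHeytingToSSet.map f) := by
  ext m x
  exact map_heytingMaltsev (f.app m).hom _ _ _

end Maltsev

variable (f : X ⟶ Y)

lemma exists_comp_map_eq (hsurj : ∀ s : SimplexCategoryᵒᵖ, Function.Surjective (f.app s))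
    {m : ℕ} (v : Δ[m] ⟶ simplicialHeytingToSSet.obj Y) :
    ∃ l : Δ[m] ⟶ simplicialHeytingToSSet.obj X, l ≫ simplicialHeytingToSSet.map f = v := by
  obtain ⟨x, hx⟩ : ∃ x : (simplicialHeytingToSSet.obj X) _⦋m⦌,
      (simplicialHeytingToSSet.map f).app _ x = yonedaEquiv v := hsurj _ _
  exact ⟨yonedaEquiv.symm x,
    yonedaEquiv.injective (by rw [yonedaEquiv_comp, Equiv.apply_symm_apply, hx])⟩

open SimplexCategory

variable {n : ℕ} {k : Fin (n + 2)} {u : (Λ[n + 1, k] : SSet.{u}) ⟶ simplicialHeytingToSSet.obj X}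
  {v : Δ[n + 1] ⟶ simplicialHeytingToSSet.obj Y}

lemma exists_extendsOnFaces_or_eq (huv : u ≫ simplicialHeytingToSSet.map f = Λ[n + 1, k].ι ≫ v)
    {l : Δ[n + 1] ⟶ simplicialHeytingToSSet.obj X} (hlv : l ≫ simplicialHeytingToSSet.map f = v)
    {P : Fin (n + 2) → Prop} (hl : horn.ExtendsOnFaces u l P) {r s : Fin (n + 2)}
    (hrs : (r : ℕ) = s + 1 ∨ (s : ℕ) = r + 1) (hrk : r ≠ k) (hs : ¬ P s) :
    ∃ l' : Δ[n + 1] ⟶ simplicialHeytingToSSet.obj X, l' ≫ simplicialHeytingToSSet.map f = v ∧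
      horn.ExtendsOnFaces u l' (fun j => P j ∨ j = r) := by
  let ρ : Δ[n + 1] ⟶ Δ[n + 1] := SSet.stdSimplex.map (collapse r s hrs)
  let ρ' : Δ[n + 1] ⟶ Λ[n + 1, k] := Subcomplex.lift ρ (range_map_collapse_le_horn hrs hrk)
  have hρ' : ρ' ≫ Λ[n + 1, k].ι = ρ := rfl
  refine ⟨maltsev l (ρ' ≫ Λ[n + 1, k].ι ≫ l) (ρ' ≫ u), by simp [hlv, huv], ?_⟩
  rintro j hj (hPj | rfl)
  · have hjs : j ≠ s := by
      rintro rfl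
      exact hs hPj
    let g : Δ[n] ⟶ Δ[n] := SSet.stdSimplex.map (factor_δ (δ j ≫ collapse r s hrs) j)
    have hg : stdSimplex.δ j ≫ ρ' = g ≫ horn.ι k j hj := by
      rw [← cancel_mono Λ[n + 1, k].ι, Category.assoc, hρ', Category.assoc, horn.ι_ι]
      exact (SSet.stdSimplex.map_comp _ _).symm.trans <|
        (congrArg _ (δ_comp_collapse_eq_factor_δ_comp_δ hjs)).trans (SSet.stdSimplex.map_comp _ _)
    have hb : stdSimplex.δ j ≫ ρ' ≫ Λ[n + 1, k].ι ≫ l = stdSimplex.δ j ≫ ρ' ≫ u := by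
      rw [reassoc_of% hg, horn.ι_ι_assoc, hl j hj hPj, reassoc_of% hg]
    rw [comp_maltsev, hb, maltsev_self_right, hl j hj hPj]
  · have hr : stdSimplex.δ j ≫ ρ' = horn.ι k j hj := by
      rw [← cancel_mono Λ[n + 1, k].ι, Category.assoc, hρ', horn.ι_ι]
      exact (SSet.stdSimplex.map_comp _ _).symm.trans (congrArg _ δ_comp_collapse_self)
    rw [comp_maltsev, reassoc_of% hr, horn.ι_ι_assoc, maltsev_self_left]
    simpa only [Category.assoc] using hr =≫ u

lemma exists_extendsOnFaces_outside
    (hsurj : ∀ s : SimplexCategoryᵒᵖ, Function.Surjective (f.app s))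
    (huv : u ≫ simplicialHeytingToSSet.map f = Λ[n + 1, k].ι ≫ v) (a b : ℕ) (ha : a ≤ k)
    (hb : k ≤ b) (hbn : b ≤ n + 1) :
    ∃ l : Δ[n + 1] ⟶ simplicialHeytingToSSet.obj X, l ≫ simplicialHeytingToSSet.map f = v ∧
      horn.ExtendsOnFaces u l (fun j => (j : ℕ) < a ∨ b < j) := by
  obtain ⟨d, hd⟩ : ∃ d, a + (n + 1 - b) = d := ⟨_, rfl⟩
  induction d generalizing a b with
  | zero =>
    obtain ⟨l, hl⟩ := exists_comp_map_eq f hsurj v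
    exact ⟨l, hl, fun j _ hj => by omega⟩
  | succ d ih =>
    rcases Nat.eq_zero_or_pos a with rfl | ha₀
    · obtain ⟨l, hlv, hl⟩ := ih 0 (b + 1) ha (by omega) (by omega) (by omega)
      obtain ⟨l', hl'v, hl'⟩ := exists_extendsOnFaces_or_eq f huv hlv hl
        (r := ⟨b + 1, by omega⟩) (s := ⟨b, by omega⟩) (Or.inl rfl)
        (Fin.ne_of_val_ne (by simp only; omega)) (by simp only; omega)
      refine ⟨l', hl'v, fun j hj hjP => hl' j hj ?_⟩
      simp only [Fin.ext_iff] at hjP ⊢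
      omega
    · obtain ⟨l, hlv, hl⟩ := ih (a - 1) b (by omega) hb hbn (by omega)
      obtain ⟨l', hl'v, hl'⟩ := exists_extendsOnFaces_or_eq f huv hlv hl
        (r := ⟨a - 1, by omega⟩) (s := ⟨a, by omega⟩) (Or.inr (by simp only; omega))
        (Fin.ne_of_val_ne (by simp only; omega)) (by simp only; omega)
      refine ⟨l', hl'v, fun j hj hjP => hl' j hj ?_⟩
      simp only [Fin.ext_iff] at hjP ⊢
      omega

end SimplicialHeyting

open SimplicialHeyting in
/-- A degreewise surjective morphism of simplicial Heyting algebras is a Kan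
fibration on underlying simplicial sets. -/
theorem simplicial_heyting_surjective_is_kan_fibration
    (X Y : CategoryTheory.SimplicialObject HeytAlg.{u}) (f : X ⟶ Y)
    (hsurj : ∀ s : SimplexCategoryᵒᵖ, Function.Surjective (f.app s)) :
    ∀ (n : ℕ) (k : Fin (n + 2)),
      HasLiftingProperty (horn (n + 1) k).ι (simplicialHeytingToSSet.map f) := by
  intro n k
  refine ⟨fun {u v} sq => ?_⟩
  obtain ⟨l, hlv, hl⟩ :=
    exists_extendsOnFaces_outside f hsurj sq.w k k le_rfl le_rfl (Nat.lt_succ_iff.mp k.isLt)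
  refine ⟨⟨{ l := l, fac_left := horn.hom_ext' fun j hj => ?_, fac_right := hlv }⟩⟩
  rw [horn.ι_ι_assoc]
  exact hl j hj (lt_or_gt_of_ne (Fin.val_ne_of_ne hj))
end

section
/- (Upward step of the filler construction.) Let X and Y be simplicial sets equipped with Maltsev structures m^X, m^Y, and let f : X ⟶ Y be a morphism of simplicial sets compatible with the Maltsev structures. Fix n ≥ 1, y ∈ Y_n, and 0 ≤ j ≤ n-1. Suppose w ∈ X_n satisfies f_n(w) = y, and x_j ∈ X_{n-1} satisfies f_{n-1}(x_j) = d_j y. Set w' := m^X_n(w, s_j d_j w, s_j x_j). Then: (i) f_n(w') = y; (ii) d_j w' = x_j; and (iii) for every i < j and every x_i ∈ X_{n-1}, if d_i w = x_i and d_i x_j = d_{j-1} x_i, then d_i w' = x_i. -/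
open CategoryTheory Simplicial SSet Opposite

universe u

/-- A Maltsev structure on a simplicial set `X`: a family of ternary operations,
one in each degree, commuting with the action of every morphism of the simplex
category and satisfying the Maltsev identities. -/
structure MaltsevStructure (X : SSet.{u}) where
  mal : ∀ s : SimplexCategoryᵒᵖ, X.obj s → X.obj s → X.obj s → X.obj s
  natural : ∀ {s t : SimplexCategoryᵒᵖ} (φ : s ⟶ t) (a b c : X.obj s),
    X.map φ (mal s a b c) = mal t (X.map φ a) (X.map φ b) (X.map φ c)
  mal_left : ∀ (s : SimplexCategoryᵒᵖ) (a b : X.obj s), mal s a a b = b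
  mal_right : ∀ (s : SimplexCategoryᵒᵖ) (a b : X.obj s), mal s a b b = a

/-- A morphism of simplicial sets is compatible with given Maltsev structures if
it commutes with the ternary operations in every degree. -/
def MaltsevCompatible {X Y : SSet.{u}} (f : X ⟶ Y)
    (mX : MaltsevStructure X) (mY : MaltsevStructure Y) : Prop :=
  ∀ (s : SimplexCategoryᵒᵖ) (a b c : X.obj s),
    f.app s (mX.mal s a b c) = mY.mal s (f.app s a) (f.app s b) (f.app s c)

/-- Transport of simplices along an equality of dimensions. -/
def castDim (X : SSet.{u}) {a b : ℕ} (h : a = b) (x : X _⦋a⦌) : X _⦋b⦌ := h ▸ x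

/-!
Replacing the `j`-th face of `w` by `x` is done by the Maltsev term `w' = m (w, sⱼ dⱼ w, sⱼ x)`.
When `f x = dⱼ (f w)`, the last two arguments have the same image under `f`, so `f w' = f w`.
Since `dⱼ sⱼ = id`, the `j`-th face of `w'` is `m (dⱼ w, dⱼ w, x) = x`. For `i < j` the simplicial
identities move `dᵢ` past `sⱼ` and `dⱼ`, and the compatibility `dᵢ x = d_{j-1} dᵢ w` makes the last
two arguments of `dᵢ w'` equal, so `dᵢ w' = dᵢ w`.
-/

namespace MaltsevStructure

variable {X : SSet.{u}} (m : MaltsevStructure X)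

lemma δ_mal {n : ℕ} (i : Fin (n + 2)) (a b c : X _⦋n + 1⦌) :
    X.δ i (m.mal _ a b c) = m.mal _ (X.δ i a) (X.δ i b) (X.δ i c) :=
  m.natural _ a b c

def replaceFace {n : ℕ} (j : Fin (n + 1)) (w : X _⦋n + 1⦌) (x : X _⦋n⦌) : X _⦋n + 1⦌ :=
  m.mal _ w (X.σ j (X.δ j.castSucc w)) (X.σ j x)

lemma δ_replaceFace_self {n : ℕ} (j : Fin (n + 1)) (w : X _⦋n + 1⦌) (x : X _⦋n⦌) :
    X.δ j.castSucc (m.replaceFace j w x) = x := by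
  rw [replaceFace, δ_mal, δ_comp_σ_self_apply, δ_comp_σ_self_apply, m.mal_left]

lemma δ_replaceFace_of_le {n : ℕ} {i : Fin (n + 2)} {j : Fin (n + 1)} (hij : i ≤ j.castSucc)
    (w : X _⦋n + 2⦌) (x : X _⦋n + 1⦌)
    (hx : X.δ i x = X.δ j.castSucc (X.δ i.castSucc w)) :
    X.δ i.castSucc (m.replaceFace j.succ w x) = X.δ i.castSucc w := by
  rw [replaceFace, δ_mal, δ_comp_σ_of_le_apply hij, δ_comp_σ_of_le_apply hij,
    ← Fin.succ_castSucc, δ_comp_δ_apply hij, hx, m.mal_right]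

end MaltsevStructure

lemma MaltsevCompatible.app_replaceFace {X Y : SSet.{u}} {f : X ⟶ Y}
    {mX : MaltsevStructure X} {mY : MaltsevStructure Y} (hf : MaltsevCompatible f mX mY)
    {n : ℕ} (j : Fin (n + 1)) (w : X _⦋n + 1⦌) {x : X _⦋n⦌}
    (hx : f.app _ x = Y.δ j.castSucc (f.app _ w)) :
    f.app _ (mX.replaceFace j w x) = f.app _ w := by
  rw [MaltsevStructure.replaceFace, hf, σ_naturality_apply, σ_naturality_apply,
    δ_naturality_apply, hx, mY.mal_right]

/-- Upward step of the filler construction: if `f w = y` and `f xj = dⱼ y`, then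
`w' = m (w, sⱼ dⱼ w, sⱼ xj)` still lies over `y`, has `dⱼ w' = xj`, and retains
all faces `dᵢ w = xᵢ` for `i < j` provided `dᵢ xj = d_{j-1} xᵢ`. -/
theorem maltsev_filler_upward_step
    {X Y : SSet.{u}} (mX : MaltsevStructure X) (mY : MaltsevStructure Y)
    (f : X ⟶ Y) (hcompat : MaltsevCompatible f mX mY)
    (n : ℕ) (y : Y _⦋n + 1⦌) (j : Fin (n + 1))
    (w : X _⦋n + 1⦌) (hw : f.app (op ⦋n + 1⦌) w = y)
    (xj : X _⦋n⦌) (hxj : f.app (op ⦋n⦌) xj = Y.δ j.castSucc y) :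
    f.app (op ⦋n + 1⦌) (mX.mal (op ⦋n + 1⦌) w (X.σ j (X.δ j.castSucc w)) (X.σ j xj)) = y ∧
    X.δ j.castSucc (mX.mal (op ⦋n + 1⦌) w (X.σ j (X.δ j.castSucc w)) (X.σ j xj)) = xj ∧
    ∀ (l : ℕ) (hl : n = l + 1) (i : Fin (n + 2)) (hij : (i : ℕ) < (j : ℕ)) (xi : X _⦋n⦌),
      X.δ i w = xi →
      X.δ (n := l) ⟨(i : ℕ), by omega⟩ (castDim X hl xj) =
        X.δ (n := l) ⟨(j : ℕ) - 1, by omega⟩ (castDim X hl xi) →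
      X.δ i (mX.mal (op ⦋n + 1⦌) w (X.σ j (X.δ j.castSucc w)) (X.σ j xj)) = xi := by
  refine ⟨hcompat.app_replaceFace j w (hw ▸ hxj) |>.trans hw,
    mX.δ_replaceFace_self j w xj, ?_⟩
  rintro l rfl i hij xi rfl hface
  obtain ⟨j, rfl⟩ : ∃ j' : Fin (l + 1), j'.succ = j := Fin.exists_succ_eq.mpr (by
    rintro rfl; exact absurd hij (Nat.not_lt_zero _))
  obtain ⟨i, rfl⟩ : ∃ i' : Fin (l + 2), i'.castSucc = i := Fin.exists_castSucc_eq.mpr (by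
    rintro rfl; rw [Fin.val_last, Fin.val_succ] at hij; omega)
  -- `castDim X rfl` is the identity and the two `Fin.mk` indices reduce to `i` and `j.castSucc`.
  exact mX.δ_replaceFace_of_le (Fin.le_castSucc_iff.mpr hij) w xj hface
end
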